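/- Define an abstract box-traversal system on trees: the current node u moves according to four kinds of steps: (Call-descend) u moves to a newly created child with a strictly larger creation number; (Call-stay) u stays put; (Exit-up) u moves to its parent; (Exit-brother) u moves to a newly created sibling with strictly larger creation number; (Fail-up) u moves to its parent; (Redo) u jumps to a node already in the tree. Then in the resulting trace, for any step of kind Call-descend or Exit-brother, the creation number attribute r' of the next event is strictly greater than the attribute r of the current event, while for Exit-up and Fail-up the next event's attribute r' is strictly smaller than r or the current node is the root. Hence the sign of r' − r together with the port uniquely discriminates between Call-stay and Call-descend, and between Exit-up and Exit-brother. -/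
import Mathlib


inductive StepKind : Type
  | callDescend | callStay | exitUp | exitBrother | failUp | redo
deriving DecidableEq

/-- Abstract box-traversal steps on tree nodes (Dewey words), relative to a
creation numbering `nu`. Newly created nodes receive strictly larger numbers. -/
inductive BStep (nu : List ℕ+ → ℕ) : StepKind → List ℕ+ → List ℕ+ → Prop
  | callDescend (u : List ℕ+) (i : ℕ+) :
      nu u < nu (u ++ [i]) → BStep nu StepKind.callDescend u (u ++ [i])
  | callStay (u : List ℕ+) : BStep nu StepKind.callStay u u
  | exitUp (u : List ℕ+) : BStep nu StepKind.exitUp u u.dropLast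
  | exitBrother (u : List ℕ+) (i : ℕ+) : u ≠ [] →
      nu u < nu (u.dropLast ++ [i]) → BStep nu StepKind.exitBrother u (u.dropLast ++ [i])
  | failUp (u : List ℕ+) : BStep nu StepKind.failUp u u.dropLast
  | redo (u v : List ℕ+) : BStep nu StepKind.redo u v

/-- Given that ancestors carry strictly smaller creation numbers, the creation
number attribute strictly increases on `callDescend` and `exitBrother` steps,
strictly decreases (or the node is the root) on `exitUp` and `failUp` steps,
and hence the sign of `r' − r` together with the port discriminates between
`callStay` and `callDescend`, and between `exitUp` and `exitBrother`. -/
theorem attribute_discrimination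
    (nu : List ℕ+ → ℕ)
    (hanc : ∀ v : List ℕ+, v ≠ [] → nu v.dropLast < nu v) :
    ∀ (k : StepKind) (u u' : List ℕ+), BStep nu k u u' →
      ((k = StepKind.callDescend ∨ k = StepKind.exitBrother) → nu u < nu u') ∧
      ((k = StepKind.exitUp ∨ k = StepKind.failUp) → nu u' < nu u ∨ u = []) ∧
      ((k = StepKind.callStay ∨ k = StepKind.callDescend) →
        ((k = StepKind.callStay ↔ nu u' = nu u) ∧
         (k = StepKind.callDescend ↔ nu u < nu u'))) ∧
      ((k = StepKind.exitUp ∨ k = StepKind.exitBrother) →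
        ((k = StepKind.exitBrother ↔ (nu u < nu u' ∧ u ≠ [])) ∧
         (k = StepKind.exitUp ↔ (nu u' < nu u ∨ u = [])))) := by
  intro k u u' h
  cases h with
  | callDescend u i hlt =>
      refine ⟨fun _ => hlt, by simp, fun _ => ⟨by simp [Nat.ne_of_gt hlt], by simp [hlt]⟩,
        by simp⟩
  | callStay u =>
      exact ⟨by simp, by simp, fun _ => ⟨by simp, by simp [lt_irrefl]⟩, by simp⟩
  | exitUp u =>
      rcases eq_or_ne u [] with rfl | hne
      · exact ⟨by simp, fun _ => Or.inr rfl, by simp, fun _ => ⟨by simp, by simp⟩⟩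
      · have h1 := hanc u hne
        exact ⟨by simp, fun _ => Or.inl h1, by simp,
          fun _ => ⟨by simp [not_lt.mpr h1.le], by simp [h1]⟩⟩
  | exitBrother u i hne hlt =>
      have h2 : ¬ nu (u.dropLast ++ [i]) < nu u := not_lt.mpr hlt.le
      exact ⟨fun _ => hlt, by simp, by simp,
        fun _ => ⟨by simp [hlt, hne], by simp [h2, hne]⟩⟩
  | failUp u =>
      rcases eq_or_ne u [] with rfl | hne
      · exact ⟨by simp, fun _ => Or.inr rfl, by simp, by simp⟩
      · exact ⟨by simp, fun _ => Or.inl (hanc u hne), by simp, by simp⟩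
  | redo u v =>
      exact ⟨by simp, by simp, by simp, by simp⟩
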